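/- In the RCD(K,∞) setting, assume the potential F satisfies (F) and (FF). Then there is an increasing function D₄ : [0,∞) → [0,∞), depending only on F and K, such that for every T > 0, every integer n ≥ 1, every σ ∈ [−T,0], every h ∈ (0, T/n] and every Lipschitz a : S → ℝ, the function b(x) = ∫_S exp((1/n)·F(σ,z)) a(z) p_h(x,dz) satisfies Lip(b) ≤ e^{D₄(T)/n}·(Lip(a) + ‖a‖_∞) and ‖b‖_∞ ≤ e^{D₄(T)/n}·‖a‖_∞. -/

import Mathlib

open MeasureTheory Filter Set
open scoped ENNReal NNReal

noncomputable section

/-- The curve of functions `w` has `g` as derivative at `t` within the time set `I`,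
in the sense of `L²(m)`. -/
def HasL2DerivWithinAt {S : Type*} [MeasurableSpace S] (m : Measure S)
    (w : ℝ → S → ℝ) (g : S → ℝ) (I : Set ℝ) (t : ℝ) : Prop :=
  Filter.Tendsto (fun τ => eLpNorm (fun x => (w τ x - w t x) / (τ - t) - g x) 2 m)
    (nhdsWithin t (I \ {t})) (nhds 0)

/-- The curve of functions `w` is continuous on the time set `I` with values in `L²(m)`. -/
def L2ContinuousOn {S : Type*} [MeasurableSpace S] (m : Measure S)
    (w : ℝ → S → ℝ) (I : Set ℝ) : Prop :=
  ∀ t ∈ I, Filter.Tendsto (fun τ => eLpNorm (fun x => w τ x - w t x) 2 m)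
    (nhdsWithin t I) (nhds 0)

/-- `w` belongs to `C¹(I, L²(m))`, with (L²-valued) time derivative `w'`. -/
structure C1L2On {S : Type*} [MeasurableSpace S] (m : Measure S) (I : Set ℝ)
    (w w' : ℝ → S → ℝ) : Prop where
  memL2 : ∀ t ∈ I, MemLp (w t) 2 m
  memL2' : ∀ t ∈ I, MemLp (w' t) 2 m
  hasDeriv : ∀ t ∈ I, HasL2DerivWithinAt m w (w' t) I t
  cont : L2ContinuousOn m w I
  cont' : L2ContinuousOn m w' I

/-- The Dirichlet form setting: a compact metric space `S`, a Borel probability measure `m`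
positive on open sets, a symmetric, closed, Markovian, regular, strongly local bilinear
form `E` with dense domain `domE ⊆ L²(S,m)`, whose carré du champ `Γ` is defined on `domE`,
the associated non-positive self-adjoint operator `Δ` and the backward contraction
semigroup `P` generated by `-(1/2)Δ`. -/
structure DirichletSetting (S : Type*) [MetricSpace S] [CompactSpace S]
    [MeasurableSpace S] [BorelSpace S] (m : Measure S) where
  /-- the domain of the form -/
  domE : Set (S → ℝ)
  /-- the Dirichlet form -/
  E : (S → ℝ) → (S → ℝ) → ℝ
  /-- the carré du champ -/
  Γ : (S → ℝ) → (S → ℝ) → S → ℝ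
  /-- the domain of the generator -/
  domΔ : Set (S → ℝ)
  /-- the generator ("Laplacian") -/
  Δ : (S → ℝ) → S → ℝ
  /-- the semigroup `P h = P_{t, t+h}` generated by `-(1/2)Δ`, backward in time -/
  P : ℝ → (S → ℝ) → S → ℝ
  m_prob : IsProbabilityMeasure m
  m_pos : ∀ U : Set S, IsOpen U → U.Nonempty → 0 < m U
  -- `domE` is a dense subspace of `L²(S,m)`
  domE_memL2 : ∀ f ∈ domE, MemLp f 2 m
  domE_zero : (0 : S → ℝ) ∈ domE
  domE_add : ∀ f ∈ domE, ∀ g ∈ domE, f + g ∈ domE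
  domE_smul : ∀ (c : ℝ), ∀ f ∈ domE, c • f ∈ domE
  domE_dense : ∀ f : S → ℝ, MemLp f 2 m → ∀ ε : ℝ, 0 < ε →
    ∃ g ∈ domE, eLpNorm (f - g) 2 m < ENNReal.ofReal ε
  -- `E` is symmetric bilinear and non-negative
  E_symm : ∀ f g, E f g = E g f
  E_add_left : ∀ f ∈ domE, ∀ g ∈ domE, ∀ h ∈ domE, E (f + g) h = E f h + E g h
  E_smul_left : ∀ (c : ℝ), ∀ f ∈ domE, ∀ g ∈ domE, E (c • f) g = c * E f g
  E_nonneg : ∀ f ∈ domE, 0 ≤ E f f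
  -- `E` is closed: `domE` is complete under the norm `‖·‖_{D(E)}`
  closed : ∀ u : ℕ → S → ℝ, (∀ n, u n ∈ domE) →
    (∀ ε : ℝ, 0 < ε → ∃ N, ∀ p ≥ N, ∀ q ≥ N,
      (eLpNorm (u p - u q) 2 m).toReal ^ 2 + E (u p - u q) (u p - u q) < ε) →
    ∃ f ∈ domE, Filter.Tendsto
      (fun n => (eLpNorm (u n - f) 2 m).toReal ^ 2 + E (u n - f) (u n - f))
      Filter.atTop (nhds 0)
  -- `E` is Markovian
  markovian : ∀ f ∈ domE, ∀ η : ℝ → ℝ, LipschitzWith 1 η → η 0 = 0 →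
    (η ∘ f) ∈ domE ∧ E (η ∘ f) (η ∘ f) ≤ E f f
  -- `E` is regular: it has a core
  regular : ∃ core : Set (S → ℝ), core ⊆ domE ∧ (∀ f ∈ core, Continuous f) ∧
    (∀ f ∈ domE, ∀ ε : ℝ, 0 < ε → ∃ g ∈ core,
      (eLpNorm (f - g) 2 m).toReal ^ 2 + E (f - g) (f - g) < ε) ∧
    (∀ f : S → ℝ, Continuous f → ∀ ε : ℝ, 0 < ε → ∃ g ∈ core, ∀ x, |f x - g x| < ε)
  -- `E` is strongly local
  strongly_local : ∀ f ∈ domE, ∀ g ∈ domE, ∀ c : ℝ, ∀ U : Set S, IsOpen U →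
    tsupport g ⊆ U → (∀ x ∈ U, f x = c) → E f g = 0
  -- the generator `Δ`
  domΔ_subset : domΔ ⊆ domE
  domΔ_dense : ∀ f : S → ℝ, MemLp f 2 m → ∀ ε : ℝ, 0 < ε →
    ∃ g ∈ domΔ, eLpNorm (f - g) 2 m < ENNReal.ofReal ε
  Δ_memL2 : ∀ f ∈ domΔ, MemLp (Δ f) 2 m
  Δ_ibp : ∀ f ∈ domΔ, ∀ g ∈ domE, ∫ x, -(Δ f x) * g x ∂m = E f g
  Δ_symm : ∀ f ∈ domΔ, ∀ g ∈ domΔ, ∫ x, Δ f x * g x ∂m = ∫ x, f x * Δ g x ∂m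
  -- the semigroup `P`
  P_memL2 : ∀ h : ℝ, 0 ≤ h → ∀ f : S → ℝ, MemLp f 2 m → MemLp (P h f) 2 m
  P_zero : ∀ f : S → ℝ, MemLp f 2 m → P 0 f =ᵐ[m] f
  P_semigroup : ∀ h k : ℝ, 0 ≤ h → 0 ≤ k → ∀ f : S → ℝ, MemLp f 2 m →
    P h (P k f) =ᵐ[m] P (h + k) f
  P_contract : ∀ h : ℝ, 0 ≤ h → ∀ f : S → ℝ, MemLp f 2 m →
    eLpNorm (P h f) 2 m ≤ eLpNorm f 2 m
  P_add : ∀ h : ℝ, 0 ≤ h → ∀ f g : S → ℝ, MemLp f 2 m → MemLp g 2 m →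
    P h (f + g) =ᵐ[m] P h f + P h g
  P_smul : ∀ h : ℝ, 0 ≤ h → ∀ (c : ℝ), ∀ f : S → ℝ, MemLp f 2 m →
    P h (c • f) =ᵐ[m] c • P h f
  P_strong_cont : ∀ f : S → ℝ, MemLp f 2 m →
    Filter.Tendsto (fun h => eLpNorm (fun x => P h f x - f x) 2 m)
      (nhdsWithin 0 (Set.Ici 0)) (nhds 0)
  P_generator : ∀ f ∈ domΔ,
    Filter.Tendsto (fun h => eLpNorm (fun x => (P h f x - f x) / h - (1/2) * Δ f x) 2 m)
      (nhdsWithin 0 (Set.Ioi 0)) (nhds 0)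
  P_posPreserving : ∀ h : ℝ, 0 ≤ h → ∀ f : S → ℝ, MemLp f 2 m →
    (∀ᵐ x ∂m, 0 ≤ f x) → ∀ᵐ x ∂m, 0 ≤ P h f x
  -- the carré du champ `Γ`
  Γ_int : ∀ f ∈ domE, ∀ g ∈ domE, Integrable (Γ f g) m
  Γ_symm : ∀ f g, Γ f g = Γ g f
  Γ_add_left : ∀ f ∈ domE, ∀ g ∈ domE, ∀ h ∈ domE, Γ (f + g) h =ᵐ[m] Γ f h + Γ g h
  Γ_smul_left : ∀ (c : ℝ), ∀ f ∈ domE, ∀ g ∈ domE, Γ (c • f) g =ᵐ[m] c • Γ f g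
  Γ_nonneg : ∀ f ∈ domE, ∀ᵐ x ∂m, 0 ≤ Γ f f x
  E_eq_integral : ∀ f ∈ domE, ∀ g ∈ domE, E f g = ∫ x, Γ f g x ∂m
  Γ_cauchySchwarz : ∀ f ∈ domE, ∀ g ∈ domE,
    ∀ᵐ x ∂m, |Γ f g x| ≤ Real.sqrt (Γ f f x) * Real.sqrt (Γ g g x)
  -- chain rule for `Γ`
  Γ_chain : ∀ f ∈ domE, ∀ g ∈ domE, ∀ η : ℝ → ℝ, (∃ L : ℝ≥0, LipschitzWith L η) →
    ContDiff ℝ 1 η →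
    (η ∘ f) ∈ domE ∧ Γ (η ∘ f) g =ᵐ[m] fun x => deriv η (f x) * Γ f g x
  -- Leibniz rule for `Γ`
  Γ_leibniz : ∀ f ∈ domE, ∀ g ∈ domE, ∀ h ∈ domE,
    (∃ C : ℝ, ∀ᵐ x ∂m, |f x| ≤ C) → (∃ C : ℝ, ∀ᵐ x ∂m, |g x| ≤ C) →
    (∃ C : ℝ, ∀ᵐ x ∂m, |h x| ≤ C) →
    (fun x => f x * g x) ∈ domE ∧
      Γ (fun x => f x * g x) h =ᵐ[m] fun x => f x * Γ g h x + g x * Γ f h x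

/-- The Dirichlet form setting together with the Brownian motion associated with the
Dirichlet form: for `m`-a.e. starting point `x` and every starting time `t ≤ 0`, a Borel
probability measure `Pb t x` on paths, concentrated on continuous paths starting at `x`
at time `t`, linked to the semigroup `P` and satisfying the Markov property. -/
structure BrownianSetting (S : Type*) [MetricSpace S] [CompactSpace S]
    [MeasurableSpace S] [BorelSpace S] (m : Measure S)
    extends DirichletSetting S m where
  /-- Wiener measure of the Brownian motion started at `x` at time `t` -/
  Pb : ℝ → S → Measure (ℝ → S)
  Pb_prob : ∀ t : ℝ, t ≤ 0 → ∀ᵐ x ∂m, IsProbabilityMeasure (Pb t x)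
  Pb_start : ∀ t : ℝ, t ≤ 0 → ∀ᵐ x ∂m, Pb t x {γ | γ t = x} = 1
  Pb_cont_paths : ∀ t : ℝ, t ≤ 0 → ∀ᵐ x ∂m,
    Pb t x {γ | ContinuousOn γ (Set.Ici t)} = 1
  Pb_semigroup : ∀ t s : ℝ, t ≤ s → ∀ f : S → ℝ, MemLp f 2 m →
    (fun x => P (s - t) f x) =ᵐ[m] fun x => ∫ γ, f (γ s) ∂(Pb t x)
  Pb_markov : ∀ t s : ℝ, t ≤ s → ∀ Φ : (ℝ → S) → ℝ, Measurable Φ →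
    (∃ C : ℝ, ∀ γ, |Φ γ| ≤ C) → (∀ γ γ' : ℝ → S, (∀ r, s ≤ r → γ r = γ' r) → Φ γ = Φ γ') →
    ∀ᵐ x ∂m, ∫ γ, Φ γ ∂(Pb t x) = ∫ γ, (∫ γ', Φ γ' ∂(Pb s (γ s))) ∂(Pb t x)

/-- The (squared-integral) Wasserstein distance `W₂` between two Borel measures on `S`. -/
def W2 {S : Type*} [MetricSpace S] [MeasurableSpace S] (μ ν : Measure S) : ℝ :=
  Real.sqrt (sInf {c : ℝ | ∃ Sig : Measure (S × S), IsProbabilityMeasure Sig ∧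
    Sig.map Prod.fst = μ ∧ Sig.map Prod.snd = ν ∧ c = ∫ p, dist p.1 p.2 ^ 2 ∂Sig})

/-- The `RCD(K,∞)` setting: `(S,d,m)` is an `RCD(K,∞)` space and `E` is the double of
Cheeger's energy.  We record the consequences used in the paper: every point is the
starting point of a Brownian motion, the transition probabilities
`p_h(x,·) = (e_h)_# P^{(0,x)}`  are `e^{-Kh}`-Lipschitz in `x` for the Wasserstein
distance `W₂`, have a symmetric density with respect to `m`, and
`Γ(a,a) ≤ Lip(a)²` for every Lipschitz `a`. -/
structure RCDSetting (S : Type*) [MetricSpace S] [CompactSpace S]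
    [MeasurableSpace S] [BorelSpace S] (m : Measure S) (K : ℝ)
    extends BrownianSetting S m where
  Pb_prob_all : ∀ (t : ℝ) (x : S), IsProbabilityMeasure (Pb t x)
  Pb_start_all : ∀ (t : ℝ) (x : S), Pb t x {γ | γ t = x} = 1
  trans_lipschitz : ∀ hh : ℝ, 0 < hh → ∀ x y : S,
    W2 (Measure.map (fun γ => γ hh) (Pb 0 x)) (Measure.map (fun γ => γ hh) (Pb 0 y)) ≤
      Real.exp (-K * hh) * dist x y
  trans_density : ∀ hh : ℝ, 0 < hh → ∃ pd : S → S → ℝ≥0∞,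
    (∀ x y, pd x y = pd y x) ∧
    ∀ x, Measure.map (fun γ => γ hh) (Pb 0 x) = m.withDensity (pd x)
  Γ_lipschitz : ∀ (a : S → ℝ) (L : ℝ≥0), LipschitzWith L a →
    a ∈ domE ∧ ∀ᵐ x ∂m, Γ a a x ≤ (L : ℝ) ^ 2

/-- Hypothesis (F): the potential `F` belongs to `C¹((-∞,0], C(S,ℝ))`. -/
def CondF {S : Type*} [TopologicalSpace S] [CompactSpace S] (F : ℝ → C(S, ℝ)) : Prop :=
  ∃ F' : ℝ → C(S, ℝ), (∀ t ∈ Set.Iic (0:ℝ), HasDerivWithinAt F (F' t) (Set.Iic 0) t) ∧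
    ContinuousOn F' (Set.Iic 0)

/-- Hypothesis (FF): `F(t,·)` is Lipschitz, with Lipschitz constant bounded by an
increasing function `D₂(T)` for `t ∈ [-T,0]`. -/
def CondFF {S : Type*} [MetricSpace S] [CompactSpace S] (F : ℝ → C(S, ℝ)) : Prop :=
  ∃ D₂ : ℝ → ℝ, Monotone D₂ ∧ (∀ T : ℝ, 0 ≤ T → 0 ≤ D₂ T) ∧
    ∀ T : ℝ, 0 ≤ T → ∀ t ∈ Set.Icc (-T) (0:ℝ),
      LipschitzWith (Real.toNNReal (D₂ T)) (F t)

/-- `w` is a strong solution, on `(-∞, s]`, of the backward Schrödinger equation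
`∂_t w + (1/2) Δ w + F w = 0` with final condition `w(s,·) = w₀`:
`w ∈ C¹((-∞,s], L²(S,m)) ∩ C((-∞,s], D(Δ))` and the equation holds in `L²(S,m)`
(i.e. `m`-a.e.) for every `t ≤ s`. -/
structure IsStrongSolution {S : Type*} [MetricSpace S] [CompactSpace S]
    [MeasurableSpace S] [BorelSpace S] {m : Measure S} (D : DirichletSetting S m)
    (F : ℝ → C(S, ℝ)) (s : ℝ) (w₀ : S → ℝ) (w : ℝ → S → ℝ) : Prop where
  memDom : ∀ t ≤ s, w t ∈ D.domΔ
  exists_deriv : ∃ w' : ℝ → S → ℝ, C1L2On m (Set.Iic s) w w' ∧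
    ∀ t ≤ s, ∀ᵐ x ∂m, w' t x + (1/2) * D.Δ (w t) x + F t x * w t x = 0
  contΔ : L2ContinuousOn m (fun t => D.Δ (w t)) (Set.Iic s)
  final : w s =ᵐ[m] w₀

/-- The Feynman-Kac formula: `(t,x) ↦ E^{(t,x)}[ exp(∫_t^0 F(τ,γ_τ) dτ) · w₀(γ_0) ]`. -/
def fkSol {S : Type*} [MetricSpace S] [CompactSpace S] [MeasurableSpace S] (Pb : ℝ → S → Measure (ℝ → S))
    (F : ℝ → C(S, ℝ)) (w₀ : S → ℝ) (t : ℝ) (x : S) : ℝ :=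
  ∫ γ, Real.exp (∫ τ in t..(0:ℝ), F τ (γ τ)) * w₀ (γ 0) ∂(Pb t x)

/-- The propagator `f^s(G,t,x) = (1/w(t,x)) E^{(t,x)}[ e^{∫_t^s F(τ,γ_τ)dτ} G(γ_s) w(s,γ_s)]`. -/
def fkProp {S : Type*} [MetricSpace S] [CompactSpace S] [MeasurableSpace S] (Pb : ℝ → S → Measure (ℝ → S))
    (F : ℝ → C(S, ℝ)) (w : ℝ → S → ℝ) (G : S → ℝ) (s t : ℝ) (x : S) : ℝ :=
  (w t x)⁻¹ * ∫ γ, Real.exp (∫ τ in t..s, F τ (γ τ)) * (G (γ s) * w s (γ s)) ∂(Pb t x)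

/-- The map `Φ(w)(t,·) = P_{t,0} w₀ + ∫_t^0 P_{t,s}[F(s,·) w(s,·)] ds`. -/
def PhiMap {S : Type*} [MetricSpace S] [CompactSpace S] [MeasurableSpace S] [BorelSpace S]
    {m : Measure S} (D : DirichletSetting S m) (F : ℝ → C(S, ℝ)) (w₀ : S → ℝ)
    (w : ℝ → S → ℝ) (t : ℝ) (x : S) : ℝ :=
  D.P (-t) w₀ x + ∫ s in t..(0:ℝ), D.P (s - t) (fun y => F s y * w s y) x

/-- Membership in `A_T = {w ∈ C¹([-T,0], L²(S,m)) : w(0,·) = w₀}`, together with a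
choice `w'` of the `L²`-valued time derivative of `w`. -/
structure MemAT {S : Type*} [MetricSpace S] [CompactSpace S] [MeasurableSpace S]
    [BorelSpace S] (m : Measure S) (w₀ : S → ℝ) (T : ℝ) (w w' : ℝ → S → ℝ) : Prop where
  c1 : C1L2On m (Set.Icc (-T) 0) w w'
  init : w 0 =ᵐ[m] w₀

/-- An admissible curve of measures `μ_τ = ρ_τ m` on `[t,0]`: a Borel curve of
probability measures with uniformly bounded densities with respect to `m`. -/
structure Admissible {S : Type*} [MeasurableSpace S] (m : Measure S) (t : ℝ)
    (μ : ℝ → Measure S) (ρ : ℝ → S → ℝ) : Prop where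
  meas : ∀ A : Set S, MeasurableSet A → Measurable fun τ => μ τ A
  prob : ∀ τ ∈ Set.Icc t (0:ℝ), IsProbabilityMeasure (μ τ)
  nonneg : ∀ τ ∈ Set.Icc t (0:ℝ), ∀ᵐ x ∂m, 0 ≤ ρ τ x
  eq_density : ∀ τ ∈ Set.Icc t (0:ℝ), μ τ = m.withDensity fun x => ENNReal.ofReal (ρ τ x)
  bdd : ∃ C : ℝ, ∀ τ ∈ Set.Icc t (0:ℝ), ∀ᵐ x ∂m, ρ τ x ≤ C

/-- `V ∈ W(μ)`: a Borel drift with values in `domE` such that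
`∫_t^0 ∫_S (|V|² + Γ(V,V)) dμ_τ dτ < ∞`. -/
structure MemW {S : Type*} [MetricSpace S] [CompactSpace S] [MeasurableSpace S]
    [BorelSpace S] {m : Measure S} (D : DirichletSetting S m) (t : ℝ)
    (μ : ℝ → Measure S) (V : ℝ → S → ℝ) : Prop where
  mem : ∀ τ ∈ Set.Ioo t (0:ℝ), V τ ∈ D.domE
  int_sq : ∀ τ ∈ Set.Ioo t (0:ℝ), Integrable (fun x => (V τ x) ^ 2) (μ τ)
  int_carre : ∀ τ ∈ Set.Ioo t (0:ℝ), Integrable (fun x => D.Γ (V τ) (V τ) x) (μ τ)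
  fin : IntervalIntegrable
    (fun τ => ∫ x, ((V τ x) ^ 2 + D.Γ (V τ) (V τ) x) ∂(μ τ)) MeasureTheory.volume t 0

/-- `φ` is a test function on `[t,0]`, with (L²-valued) time derivative `φ'`:
`φ ∈ C¹([t,0], L²(S,m)) ∩ L^∞([t,0], D(Δ)) ∩ L^∞([t,0] × S)`. -/
structure IsTest {S : Type*} [MetricSpace S] [CompactSpace S] [MeasurableSpace S]
    [BorelSpace S] {m : Measure S} (D : DirichletSetting S m) (t : ℝ)
    (φ φ' : ℝ → S → ℝ) : Prop where
  c1 : C1L2On m (Set.Icc t 0) φ φ'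
  memDom : ∀ τ ∈ Set.Icc t (0:ℝ), φ τ ∈ D.domΔ
  bddL2 : ∃ C : ℝ≥0∞, ∀ τ ∈ Set.Icc t (0:ℝ), eLpNorm (φ τ) 2 m ≤ C
  bddΔ : ∃ C : ℝ≥0∞, ∀ τ ∈ Set.Icc t (0:ℝ), eLpNorm (D.Δ (φ τ)) 2 m ≤ C
  bddSup : ∃ C : ℝ, ∀ τ ∈ Set.Icc t (0:ℝ), ∀ᵐ x ∂m, |φ τ x| ≤ C

/-- `μ` solves the weak Fokker-Planck equation on `[t,0]` with drift `V`:
`∫_t^0 ∫_S [∂_τ φ + (1/2) Δ φ + Γ(V,φ)] dμ_τ dτ = ∫_S φ_0 dμ_0 − ∫_S φ_t dμ_t`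
for every test function `φ`. -/
def SolvesFP {S : Type*} [MetricSpace S] [CompactSpace S] [MeasurableSpace S]
    [BorelSpace S] {m : Measure S} (D : DirichletSetting S m) (t : ℝ)
    (μ : ℝ → Measure S) (V : ℝ → S → ℝ) : Prop :=
  ∀ φ φ' : ℝ → S → ℝ, IsTest D t φ φ' →
    (∫ τ in t..(0:ℝ), ∫ x, (φ' τ x + (1/2) * D.Δ (φ τ) x + D.Γ (V τ) (φ τ) x) ∂(μ τ)) =
      (∫ x, φ 0 x ∂(μ 0)) - ∫ x, φ t x ∂(μ t)

end

/-!
Put `g = exp((1/n) F(σ,·)) a`. Continuity of `F` in time gives an increasing `N` with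
`|F(σ,·)| ≤ N(T)` for `σ ∈ [-T,0]`; with `Lip F(σ,·) ≤ D₂(T)` the product rule gives
`|g| ≤ e^{N/n} ‖a‖_∞` and `Lip g ≤ e^{N/n} (Lip a + ‖a‖_∞ D₂/n)`.
Integrating `g(z) - g(z')` against any coupling of `p_h(x,·)` and `p_h(y,·)` and taking the
infimum over couplings gives `|b(x) - b(y)| ≤ Lip g · W₂(p_h(x,·), p_h(y,·))
≤ Lip g · e^{|K| T/n} d(x,y)`, since `h ≤ T/n`. Finally `1 + D₂/n ≤ e^{D₂/n}`, so
`D₄ = N + D₂ + |K| T` works.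
-/

open Real

theorem Real.abs_exp_sub_exp_le_of_le {x y M : ℝ} (hx : x ≤ M) (hy : y ≤ M) :
    |exp x - exp y| ≤ exp M * |x - y| := by
  simpa only [Real.norm_eq_abs] using (convex_Iic M).norm_image_sub_le_of_norm_hasDerivWithin_le
    (fun z _ => (hasDerivAt_exp z).hasDerivWithinAt)
    (fun z hz => by simpa [abs_of_pos (exp_pos z)] using exp_le_exp.2 hz) hy hx

theorem exp_mul_add_mul_mul_exp_le {A β B L C : ℝ} (hβ : 0 ≤ β) (hL : 0 ≤ L) (hC : 0 ≤ C) :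
    exp A * (L + C * β) * exp B ≤ exp (A + β + B) * (L + C) := by
  have hgain : L + C * β ≤ exp β * (L + C) := by
    nlinarith [add_one_le_exp β, one_le_exp hβ]
  calc exp A * (L + C * β) * exp B ≤ exp A * (exp β * (L + C)) * exp B := by gcongr
    _ = exp (A + β + B) * (L + C) := by rw [exp_add, exp_add]; ring

theorem lipschitzWith_exp_mul {α : Type*} [PseudoMetricSpace α] {φ a : α → ℝ} {Lφ La : ℝ≥0}
    {M C : ℝ} (hφ : LipschitzWith Lφ φ) (hφM : ∀ z, φ z ≤ M) (ha : LipschitzWith La a)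
    (haC : ∀ z, |a z| ≤ C) :
    LipschitzWith (toNNReal (exp M * (La + C * Lφ))) fun z => exp (φ z) * a z := by
  refine LipschitzWith.of_dist_le' fun z w => ?_
  have hC : 0 ≤ C := (abs_nonneg _).trans (haC z)
  have hexp : |exp (φ z) - exp (φ w)| ≤ exp M * (Lφ * dist z w) :=
    (abs_exp_sub_exp_le_of_le (hφM z) (hφM w)).trans
      (mul_le_mul_of_nonneg_left (hφ.dist_le_mul z w) (exp_pos M).le)
  rw [Real.dist_eq]
  calc |exp (φ z) * a z - exp (φ w) * a w|
      = |exp (φ z) * (a z - a w) + a w * (exp (φ z) - exp (φ w))| := by ring_nf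
    _ ≤ |exp (φ z) * (a z - a w)| + |a w * (exp (φ z) - exp (φ w))| := abs_add_le _ _
    _ = exp (φ z) * |a z - a w| + |a w| * |exp (φ z) - exp (φ w)| := by
      rw [abs_mul, abs_mul, abs_of_pos (exp_pos _)]
    _ ≤ exp M * (La * dist z w) + C * (exp M * (Lφ * dist z w)) := by
      gcongr
      · exact hφM z
      · exact ha.dist_le_mul z w
      · exact haC w
    _ = exp M * (La + C * Lφ) * dist z w := by ring

theorem abs_integral_exp_mul_le {α : Type*} [MeasurableSpace α] (μ : Measure α)
    [IsProbabilityMeasure μ] {φ a : α → ℝ} {M C : ℝ} (hφM : ∀ z, φ z ≤ M)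
    (haC : ∀ z, |a z| ≤ C) : |∫ z, exp (φ z) * a z ∂μ| ≤ exp M * C := by
  have hbound : ∀ z, ‖exp (φ z) * a z‖ ≤ exp M * C := fun z => by
    rw [norm_mul, Real.norm_of_nonneg (exp_pos _).le, Real.norm_eq_abs]
    exact mul_le_mul (exp_le_exp.2 (hφM z)) (haC z) (abs_nonneg _) (exp_pos _).le
  simpa using norm_integral_le_of_norm_le_const (μ := μ) (ae_of_all _ hbound)

theorem ContinuousOn.exists_monotone_norm_bound_Icc {E : Type*} [SeminormedAddCommGroup E]
    {F : ℝ → E} (hF : ContinuousOn F (Iic 0)) :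
    ∃ N : ℝ → ℝ, Monotone N ∧ (∀ T, 0 ≤ N T) ∧ ∀ T, ∀ σ ∈ Icc (-T) 0, ‖F σ‖ ≤ N T := by
  set I : ℝ → Set ℝ := fun T => Icc (-max T 0) 0
  have hI : ∀ T, ((fun t => ‖F t‖) '' I T).Nonempty ∧ BddAbove ((fun t => ‖F t‖) '' I T) :=
    fun T => ⟨⟨_, 0, ⟨by simp, le_rfl⟩, rfl⟩,
      (isCompact_Icc.image_of_continuousOn ((hF.mono fun t ht => ht.2).norm)).bddAbove⟩
  refine ⟨fun T => sSup ((fun t => ‖F t‖) '' I T), fun T₁ T₂ hT => ?_, fun T => ?_,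
    fun T σ hσ => le_csSup (hI T).2 ⟨σ, ⟨le_trans (by simp) hσ.1, hσ.2⟩, rfl⟩⟩
  · exact csSup_le_csSup (hI T₂).2 (hI T₁).1
      (image_mono (Icc_subset_Icc (by gcongr) le_rfl))
  · exact Real.sSup_nonneg fun _ ⟨_, _, h⟩ => h ▸ norm_nonneg _

theorem CondF.continuousOn {S : Type*} [TopologicalSpace S] [CompactSpace S]
    {F : ℝ → C(S, ℝ)} (hF : CondF F) : ContinuousOn F (Iic 0) := by
  obtain ⟨F', hF', -⟩ := hF
  exact fun t ht => (hF' t ht).continuousWithinAt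

theorem integral_le_sqrt_integral_sq {Ω : Type*} [MeasurableSpace Ω] {P : Measure Ω}
    [IsProbabilityMeasure P] {f : Ω → ℝ} (hf : MemLp f 2 P) :
    ∫ ω, f ω ∂P ≤ sqrt (∫ ω, f ω ^ 2 ∂P) := by
  have hvar := ProbabilityTheory.variance_nonneg f P
  rw [ProbabilityTheory.variance_eq_sub hf] at hvar
  exact le_sqrt_of_sq_le (by simpa using hvar)

section Wasserstein

variable {S : Type*} [MetricSpace S] [CompactSpace S] [MeasurableSpace S] [BorelSpace S]

theorem abs_integral_sub_integral_le_of_coupling {μ ν : Measure S} {Sig : Measure (S × S)}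
    [IsProbabilityMeasure Sig] (hfst : Sig.map Prod.fst = μ) (hsnd : Sig.map Prod.snd = ν)
    {g : S → ℝ} {L : ℝ≥0} (hg : LipschitzWith L g) :
    |∫ z, g z ∂μ - ∫ z, g z ∂ν| ≤ L * sqrt (∫ p, dist p.1 p.2 ^ 2 ∂Sig) := by
  have hcont : Continuous fun p : S × S => dist p.1 p.2 := continuous_dist
  have hint : ∀ f : S × S → ℝ, Continuous f → Integrable f Sig := fun f hf =>
    hf.integrable_of_hasCompactSupport (HasCompactSupport.of_compactSpace f)
  have hg1 := hint (fun p => g p.1) (hg.continuous.comp continuous_fst)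
  have hg2 := hint (fun p => g p.2) (hg.continuous.comp continuous_snd)
  rw [← hfst, ← hsnd, integral_map measurable_fst.aemeasurable hg.continuous.aestronglyMeasurable,
    integral_map measurable_snd.aemeasurable hg.continuous.aestronglyMeasurable,
    ← integral_sub hg1 hg2]
  calc |∫ p, g p.1 - g p.2 ∂Sig| ≤ ∫ p, L * dist p.1 p.2 ∂Sig := by
        rw [← Real.norm_eq_abs]
        refine norm_integral_le_of_norm_le ((hint _ hcont).const_mul _) (ae_of_all _ fun p => ?_)
        simpa only [Real.dist_eq, Real.norm_eq_abs] using hg.dist_le_mul p.1 p.2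
    _ = L * ∫ p, dist p.1 p.2 ∂Sig := integral_const_mul _ _
    _ ≤ L * sqrt (∫ p, dist p.1 p.2 ^ 2 ∂Sig) := by
        gcongr
        exact integral_le_sqrt_integral_sq
          (hcont.memLp_of_hasCompactSupport (HasCompactSupport.of_compactSpace _))

theorem abs_integral_sub_integral_le_mul_W2 (μ ν : Measure S) [IsProbabilityMeasure μ]
    [IsProbabilityMeasure ν] {g : S → ℝ} {L : ℝ≥0} (hg : LipschitzWith L g) :
    |∫ z, g z ∂μ - ∫ z, g z ∂ν| ≤ L * W2 μ ν := by
  set C : Set ℝ := {c | ∃ Sig : Measure (S × S), IsProbabilityMeasure Sig ∧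
    Sig.map Prod.fst = μ ∧ Sig.map Prod.snd = ν ∧ c = ∫ p, dist p.1 p.2 ^ 2 ∂Sig}
  have hne : C.Nonempty := ⟨_, μ.prod ν, inferInstance, by simp, by simp, rfl⟩
  have hbdd : BddBelow C := ⟨0, by
    rintro c ⟨Sig, -, -, -, rfl⟩
    exact integral_nonneg fun p => sq_nonneg _⟩
  change _ ≤ L * sqrt (sInf C)
  rw [Monotone.map_csInf_of_continuousAt continuous_sqrt.continuousAt sqrt_monotone hne hbdd,
    ← smul_eq_mul, ← Real.sInf_smul_of_nonneg L.coe_nonneg]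
  refine le_csInf ((hne.image _).smul_set) ?_
  rintro _ ⟨_, ⟨_, ⟨Sig, hSig, hfst, hsnd, rfl⟩, rfl⟩, rfl⟩
  exact abs_integral_sub_integral_le_of_coupling hfst hsnd hg

theorem lipschitzWith_integral_of_W2_le {μ : S → Measure S} [∀ x, IsProbabilityMeasure (μ x)]
    {c : ℝ} (hμ : ∀ x y, W2 (μ x) (μ y) ≤ c * dist x y) {g : S → ℝ} {L : ℝ≥0}
    (hg : LipschitzWith L g) : LipschitzWith (toNNReal (L * c)) fun x => ∫ z, g z ∂μ x :=
  LipschitzWith.of_dist_le' fun x y => by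
    rw [Real.dist_eq, mul_assoc]
    exact (abs_integral_sub_integral_le_mul_W2 _ _ hg).trans
      (mul_le_mul_of_nonneg_left (hμ x y) L.coe_nonneg)

end Wasserstein

section RCD

variable {S : Type*} [MetricSpace S] [CompactSpace S] [MeasurableSpace S] [BorelSpace S]
  {m : Measure S} {K : ℝ}

theorem RCDSetting.isProbabilityMeasure_map_eval (R : RCDSetting S m K) (h : ℝ) (x : S) :
    IsProbabilityMeasure (Measure.map (fun γ => γ h) (R.Pb 0 x)) :=
  haveI := R.Pb_prob_all 0 x
  Measure.isProbabilityMeasure_map (measurable_pi_apply h).aemeasurable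

theorem RCDSetting.W2_map_eval_le (R : RCDSetting S m K) {h s : ℝ} (hh : 0 < h) (hs : h ≤ s)
    (x y : S) :
    W2 (Measure.map (fun γ => γ h) (R.Pb 0 x)) (Measure.map (fun γ => γ h) (R.Pb 0 y)) ≤
      exp (|K| * s) * dist x y :=
  (R.trans_lipschitz h hh x y).trans <| by
    gcongr
    exact neg_le_abs K

end RCD

theorem stmt5 {S : Type*} [MetricSpace S] [CompactSpace S] [MeasurableSpace S] [BorelSpace S]
    {m : MeasureTheory.Measure S} {K : ℝ} (R : RCDSetting S m K)
    (F : ℝ → C(S, ℝ)) (hF : CondF F) (hFF : CondFF F) :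
    ∃ D₄ : ℝ → ℝ, Monotone D₄ ∧ (∀ T, 0 ≤ T → 0 ≤ D₄ T) ∧
      ∀ T : ℝ, 0 < T → ∀ n : ℕ, 1 ≤ n → ∀ σ ∈ Set.Icc (-T) (0:ℝ),
        ∀ h : ℝ, 0 < h → h ≤ T / n →
        ∀ a : S → ℝ, ∀ La : ℝ≥0, LipschitzWith La a → ∀ Ca : ℝ, (∀ z, |a z| ≤ Ca) →
          LipschitzWith (Real.toNNReal (Real.exp (D₄ T / n) * ((La : ℝ) + Ca)))
            (fun x => ∫ z, Real.exp ((1 / (n:ℝ)) * F σ z) * a z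
              ∂(MeasureTheory.Measure.map (fun γ => γ h) (R.Pb 0 x))) ∧
          ∀ x : S, |∫ z, Real.exp ((1 / (n:ℝ)) * F σ z) * a z
              ∂(MeasureTheory.Measure.map (fun γ => γ h) (R.Pb 0 x))| ≤
            Real.exp (D₄ T / n) * Ca := by
  obtain ⟨N, hN_mono, hN_nonneg, hFN⟩ := hF.continuousOn.exists_monotone_norm_bound_Icc
  obtain ⟨D₂, hD₂_mono, hD₂_nonneg, hF_lip⟩ := hFF
  have hmax : Monotone fun T : ℝ => max T 0 := monotone_id.max monotone_const
  refine ⟨fun T => N T + D₂ (max T 0) + |K| * max T 0,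
    (hN_mono.add (hD₂_mono.comp hmax)).add (hmax.const_mul (abs_nonneg K)),
    fun T hT => by have := hD₂_nonneg _ (le_max_right T 0); have := hN_nonneg T; positivity, ?_⟩
  intro T hT n hn σ hσ h hh hhn a La ha Ca hCa
  rcases isEmpty_or_nonempty S with _ | ⟨⟨z₀⟩⟩
  · exact ⟨LipschitzWith.of_dist_le_mul fun x => isEmptyElim x, isEmptyElim⟩
  have hn : (0 : ℝ) < n := by exact_mod_cast hn
  have hβ := hD₂_nonneg T hT.le
  have := R.isProbabilityMeasure_map_eval h
  have hφM : ∀ z, 1 / (n : ℝ) * F σ z ≤ N T / n := fun z => by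
    rw [one_div_mul_eq_div]
    gcongr
    exact (le_abs_self _).trans ((F σ).norm_coe_le_norm z |>.trans (hFN T σ hσ))
  have hg := lipschitzWith_exp_mul ((lipschitzWith_smul (1 / (n : ℝ))).comp (hF_lip T hT.le σ hσ))
    hφM ha hCa
  have hLφ : ((‖1 / (n : ℝ)‖₊ * toNNReal (D₂ T) : ℝ≥0) : ℝ) = D₂ T / n := by
    simp [Real.coe_toNNReal _ hβ, div_eq_inv_mul]
  have hCa0 : 0 ≤ Ca := (abs_nonneg _).trans (hCa z₀)
  simp only [max_eq_left hT.le]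
  refine ⟨(lipschitzWith_integral_of_W2_le (R.W2_map_eval_le hh hhn) hg).weaken
    (Real.toNNReal_le_toNNReal ?_), fun x => (abs_integral_exp_mul_le _ hφM hCa).trans ?_⟩
  · rw [Real.coe_toNNReal _ (by positivity), hLφ, add_div, add_div, mul_div_assoc]
    exact exp_mul_add_mul_mul_exp_le (by positivity) La.coe_nonneg hCa0
  · gcongr
    nlinarith [abs_nonneg K]
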